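/- arXiv:2304.12541 — 3 statements merged into one kernel-verified Lean document; each statement's English description precedes it below -/
import Mathlib

section
/- Let (C, Z) be an ℝᵐ × ℝⁿ-valued random vector whose joint law has a strictly positive density q with respect to Lebesgue measure on ℝᵐ × ℝⁿ. Let φ(z) = (2π)^{−n/2} exp(−‖z‖²/2) denote the standard Gaussian density on ℝⁿ. If log q(c,z) − log q(c,z') = log φ(z) − log φ(z') for all c ∈ ℝᵐ and all z, z' ∈ ℝⁿ, then C and Z are independent random variables and the law of Z is the standard Gaussian measure N(0, Iₙ) on ℝⁿ. -/
/-!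
Since `φ > 0`, the hypothesis says that `q (c, z) / φ z` does not depend on `z`, so the joint
density factors as `q (c, z) = g c * φ z`. The joint law is therefore the product of the
measures with densities `g` and `φ`. As `φ` is the normalized Gaussian density, the second
factor is a probability measure, hence so is the first, and a product of probability measures
is the joint law of two independent random variables with these laws.
-/

open MeasureTheory ProbabilityTheory Real

lemma eq_div_mul_of_log_sub_log_eq {α β : Type*} {q : α × β → ℝ} {φ : β → ℝ}
    (hq : ∀ x, 0 < q x) (hφ : ∀ z, 0 < φ z)
    (h : ∀ c z z', log (q (c, z)) - log (q (c, z')) = log (φ z) - log (φ z'))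
    (c : α) (z z₀ : β) :
    q (c, z) = q (c, z₀) / φ z₀ * φ z := by
  have hg : 0 < q (c, z₀) / φ z₀ := div_pos (hq _) (hφ z₀)
  refine log_injOn_pos (hq _) (mul_pos hg (hφ z)) ?_
  rw [log_mul hg.ne' (hφ z).ne', log_div (hq _).ne' (hφ z₀).ne']
  linarith [h c z z₀]

section Gaussian

variable {V : Type*} [NormedAddCommGroup V] [InnerProductSpace ℝ V] [FiniteDimensional ℝ V]
  [MeasurableSpace V] [BorelSpace V]

lemma integral_gaussian_density :
    ∫ z : V, (2 * π) ^ (-(Module.finrank ℝ V : ℝ) / 2) * exp (-‖z‖ ^ 2 / 2) = 1 := by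
  simp_rw [neg_div, div_eq_inv_mul (‖_‖ ^ 2), ← neg_mul]
  rw [integral_const_mul, GaussianFourier.integral_rexp_neg_mul_sq_norm (by norm_num),
    div_inv_eq_mul, mul_comm π, ← rpow_add (by positivity), neg_add_cancel, rpow_zero]

lemma isProbabilityMeasure_withDensity_gaussian_density :
    IsProbabilityMeasure (volume.withDensity fun z : V =>
      ENNReal.ofReal ((2 * π) ^ (-(Module.finrank ℝ V : ℝ) / 2) * exp (-‖z‖ ^ 2 / 2))) := by
  constructor
  rw [withDensity_apply _ .univ, setLIntegral_univ, ← ofReal_integral_eq_lintegral_ofReal,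
    integral_gaussian_density, ENNReal.ofReal_one]
  · exact .of_integral_ne_zero (by rw [integral_gaussian_density]; exact one_ne_zero)
  · exact .of_forall fun z => by positivity

end Gaussian

lemma indepFun_and_map_eq_of_map_prod_eq_prod {Ω α β : Type*} [MeasurableSpace Ω]
    [MeasurableSpace α] [MeasurableSpace β] {P : Measure Ω} [IsProbabilityMeasure P]
    {X : Ω → α} {Y : Ω → β} (hX : Measurable X) (hY : Measurable Y)
    {μ : Measure α} {ν : Measure β} [SFinite μ] [IsProbabilityMeasure ν]
    (h : P.map (fun ω => (X ω, Y ω)) = μ.prod ν) :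
    IndepFun X Y P ∧ P.map X = μ ∧ P.map Y = ν := by
  have hpair : Measurable fun ω => (X ω, Y ω) := hX.prodMk hY
  have hμ : IsProbabilityMeasure μ := by
    have := (Measure.isProbabilityMeasure_map (μ := P) hpair.aemeasurable).measure_univ
    rw [h, ← Set.univ_prod_univ, Measure.prod_prod, measure_univ (μ := ν), mul_one] at this
    exact ⟨this⟩
  have hmapX : P.map X = μ := calc
    P.map X = (P.map fun ω => (X ω, Y ω)).map Prod.fst :=
      (Measure.map_map measurable_fst hpair).symm
    _ = μ := by rw [h, Measure.map_fst_prod, measure_univ, one_smul]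
  have hmapY : P.map Y = ν := calc
    P.map Y = (P.map fun ω => (X ω, Y ω)).map Prod.snd :=
      (Measure.map_map measurable_snd hpair).symm
    _ = ν := by rw [h, Measure.map_snd_prod, measure_univ, one_smul]
  refine ⟨?_, hmapX, hmapY⟩
  rw [indepFun_iff_map_prod_eq_prod_map_map hX.aemeasurable hY.aemeasurable, h, hmapX, hmapY]

/-- If the joint law of `(C, Z)` has a strictly positive density `q` with respect to
Lebesgue measure on ℝᵐ × ℝⁿ and
`log q (c, z) − log q (c, z') = log φ z − log φ z'` for all `c, z, z'`, where `φ` is the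
standard Gaussian density on ℝⁿ, then `C` and `Z` are independent and the law of `Z` is
the standard Gaussian measure `N(0, Iₙ)` (the measure with density `φ` w.r.t. Lebesgue). -/
theorem stmt1 (m n : ℕ) (Ω : Type*) [MeasureSpace Ω]
    [IsProbabilityMeasure (ℙ : Measure Ω)]
    (C : Ω → EuclideanSpace ℝ (Fin m)) (Z : Ω → EuclideanSpace ℝ (Fin n))
    (hC : Measurable C) (hZ : Measurable Z)
    (q : EuclideanSpace ℝ (Fin m) × EuclideanSpace ℝ (Fin n) → ℝ)
    (hq_meas : Measurable q) (hq_pos : ∀ x, 0 < q x)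
    (hlaw : Measure.map (fun ω => (C ω, Z ω)) ℙ
      = volume.withDensity (fun x => ENNReal.ofReal (q x)))
    (φ : EuclideanSpace ℝ (Fin n) → ℝ)
    (hφ : ∀ z, φ z = (2 * Real.pi) ^ (-(n : ℝ) / 2) * Real.exp (-‖z‖ ^ 2 / 2))
    (h : ∀ (c : EuclideanSpace ℝ (Fin m)) (z z' : EuclideanSpace ℝ (Fin n)),
      Real.log (q (c, z)) - Real.log (q (c, z'))
        = Real.log (φ z) - Real.log (φ z')) :
    IndepFun C Z ℙ ∧
    Measure.map Z ℙ = volume.withDensity (fun z => ENNReal.ofReal (φ z)) := by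
  have hφ_pos : ∀ z, 0 < φ z := fun z => by rw [hφ z]; positivity
  have hφ_meas : Measurable φ := by rw [funext hφ]; fun_prop
  have hfactor : (fun x => ENNReal.ofReal (q x)) =
      fun x => ENNReal.ofReal (q (x.1, 0) / φ 0) * ENNReal.ofReal (φ x.2) := by
    ext ⟨c, z⟩
    rw [eq_div_mul_of_log_sub_log_eq hq_pos hφ_pos h c z 0,
      ENNReal.ofReal_mul (div_pos (hq_pos _) (hφ_pos 0)).le]
  have hgauss : IsProbabilityMeasure (volume.withDensity fun z => ENNReal.ofReal (φ z)) := by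
    simpa only [funext hφ, finrank_euclideanSpace_fin] using
      isProbabilityMeasure_withDensity_gaussian_density (V := EuclideanSpace ℝ (Fin n))
  have hjoint : volume.withDensity (fun x => ENNReal.ofReal (q x)) =
      (volume.withDensity fun c => ENNReal.ofReal (q (c, 0) / φ 0)).prod
        (volume.withDensity fun z => ENNReal.ofReal (φ z)) := by
    rw [prod_withDensity (by fun_prop) (by fun_prop), ← Measure.volume_eq_prod, hfactor]
  obtain ⟨hindep, -, hlawZ⟩ :=
    indepFun_and_map_eq_of_map_prod_eq_prod hC hZ (hlaw.trans hjoint)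
  exact ⟨hindep, hlawZ⟩
end

section
/- Let g : ℝᵈ → ℝᵐ × ℝⁿ be a measurable equivalence (a bijection that is measurable with measurable inverse, with respect to the Borel σ-algebras). Let λ be an ℝᵈ-valued random variable on a probability space (Ω, F, ℙ) and set (C, Z) = g(λ), so C = (g ∘ λ)₁ and Z = (g ∘ λ)₂. If C and Z are independent, then for Law(C)-almost every c ∈ ℝᵐ, the conditional distribution of λ given C = c equals the pushforward of Law(Z) under the map z ↦ g⁻¹(c, z). -/
/-!
If `(C, Z) = g ∘ X` with `C` and `Z` independent, then the joint law of `(C, Z)` is the product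
`Law(C) ⊗ Law(Z)`, so the joint law of `(C, X) = (C, g⁻¹ (C, Z))` disintegrates over `Law(C)` as
`Law(C) ⊗ₘ κ` with `κ c = Law(g⁻¹ (c, Z))`. Uniqueness of disintegrations then identifies `κ` with
the conditional distribution of `X` given `C`, up to a `Law(C)`-null set.
-/

open MeasureTheory ProbabilityTheory

section

variable {α β γ : Type*} [MeasurableSpace α] [MeasurableSpace β] [MeasurableSpace γ]

lemma ProbabilityTheory.Kernel.map_id_prod_const_apply (ν : Measure γ) [SFinite ν]
    {f : β × γ → α} (hf : Measurable f) (c : β) :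
    (Kernel.id ×ₖ Kernel.const β ν).map f c = ν.map (fun z => f (c, z)) := by
  rw [Kernel.map_apply _ hf, Kernel.prod_apply, Kernel.id_apply, Kernel.const_apply,
    Measure.dirac_prod, Measure.map_map hf measurable_prodMk_left]
  rfl

lemma MeasureTheory.Measure.map_prod_fst_mk_eq_compProd (ρ : Measure β) [SFinite ρ]
    (ν : Measure γ) [SFinite ν] {f : β × γ → α} (hf : Measurable f) :
    (ρ.prod ν).map (fun p => (p.1, f p)) = ρ ⊗ₘ (Kernel.id ×ₖ Kernel.const β ν).map f := by
  have hφ : Measurable fun p : β × γ => (p.1, f p) := measurable_fst.prodMk hf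
  ext s hs
  rw [Measure.map_apply hφ hs, Measure.prod_apply (hφ hs), Measure.compProd_apply hs]
  refine lintegral_congr fun c => ?_
  rw [Kernel.map_id_prod_const_apply ν hf,
    Measure.map_apply (f := fun z => f (c, z)) (hf.comp measurable_prodMk_left)
      (measurable_prodMk_left hs)]
  rfl

theorem ProbabilityTheory.condDistrib_ae_eq_map_symm_of_indepFun [StandardBorelSpace α]
    [Nonempty α] {Ω : Type*} [MeasurableSpace Ω] {μ : Measure Ω} [IsFiniteMeasure μ]
    (g : α ≃ᵐ β × γ) {X : Ω → α} (hX : Measurable X)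
    (hindep : IndepFun (fun ω => (g (X ω)).1) (fun ω => (g (X ω)).2) μ) :
    ∀ᵐ c ∂μ.map (fun ω => (g (X ω)).1), condDistrib X (fun ω => (g (X ω)).1) μ c
      = (μ.map fun ω => (g (X ω)).2).map (fun z => g.symm (c, z)) := by
  set C := fun ω => (g (X ω)).1
  set Z := fun ω => (g (X ω)).2
  have hC : Measurable C := (g.measurable.comp hX).fst
  have hZ : Measurable Z := (g.measurable.comp hX).snd
  have hlaw_CZ : μ.map (fun ω => (C ω, Z ω)) = (μ.map C).prod (μ.map Z) :=
    (indepFun_iff_map_prod_eq_prod_map_map hC.aemeasurable hZ.aemeasurable).mp hindep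
  have hX_eq : (fun ω => (C ω, X ω)) = (fun p => (p.1, g.symm p)) ∘ fun ω => (C ω, Z ω) := by
    funext ω
    exact Prod.ext rfl (g.symm_apply_apply (X ω)).symm
  have hlaw_CX : μ.map (fun ω => (C ω, X ω))
      = μ.map C ⊗ₘ (Kernel.id ×ₖ Kernel.const β (μ.map Z)).map g.symm := by
    rw [hX_eq, ← Measure.map_map (measurable_fst.prodMk g.symm.measurable) (hC.prodMk hZ),
      hlaw_CZ, Measure.map_prod_fst_mk_eq_compProd _ _ g.symm.measurable]
  filter_upwards [condDistrib_ae_eq_of_measure_eq_compProd_of_measurable hC hX hlaw_CX] with c hc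
  rw [hc, Kernel.map_id_prod_const_apply _ g.symm.measurable]

end

/-- Let `g : ℝᵈ ≃ᵐ ℝᵐ × ℝⁿ` be a measurable equivalence, `lam` an ℝᵈ-valued random
variable, and `(C, Z) = g ∘ lam`. If `C` and `Z` are independent, then for
`Law(C)`-almost every `c`, the conditional distribution of `lam` given `C = c` is the
pushforward of `Law(Z)` under `z ↦ g⁻¹ (c, z)`. -/
theorem stmt3 (d m n : ℕ) (Ω : Type*) [MeasureSpace Ω]
    [IsProbabilityMeasure (ℙ : Measure Ω)]
    (g : EuclideanSpace ℝ (Fin d) ≃ᵐ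
      (EuclideanSpace ℝ (Fin m) × EuclideanSpace ℝ (Fin n)))
    (lam : Ω → EuclideanSpace ℝ (Fin d)) (hlam : Measurable lam)
    (C : Ω → EuclideanSpace ℝ (Fin m)) (Z : Ω → EuclideanSpace ℝ (Fin n))
    (hC : C = fun ω => (g (lam ω)).1) (hZ : Z = fun ω => (g (lam ω)).2)
    (hindep : IndepFun C Z ℙ) :
    ∀ᵐ c ∂(Measure.map C ℙ),
      condDistrib lam C ℙ c
        = Measure.map (fun z => g.symm (c, z)) (Measure.map Z ℙ) := by
  subst hC hZ
  exact condDistrib_ae_eq_map_symm_of_indepFun g hlam hindep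
end

section
/- Fix integers 0 < f < F and functions s, t : ℝ^f → ℝ^{F−f} that are differentiable at a point h₁ ∈ ℝ^f. Define the affine coupling map Φ : ℝ^f × ℝ^{F−f} → ℝ^f × ℝ^{F−f} by Φ(h₁, h₂) = (h₁, h₂ ⊙ exp(s(h₁)) + t(h₁)), where ⊙ denotes componentwise multiplication and exp is applied componentwise. Then for every h₂ ∈ ℝ^{F−f}, Φ is differentiable at (h₁, h₂), and the determinant of its Fréchet derivative at (h₁, h₂), viewed as a linear endomorphism of ℝ^f × ℝ^{F−f}, equals exp(∑_{i=1}^{F−f} s(h₁)_i) = ∏_{i=1}^{F−f} exp(s(h₁)_i). In particular this determinant is strictly positive and independent of h₂. -/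
namespace LinearMap

variable {R M N : Type*} [CommRing R] [AddCommGroup M] [Module R M] [AddCommGroup N]
  [Module R N] [Module.Free R M] [Module.Finite R M] [Module.Free R N] [Module.Finite R N]

theorem det_eq_det_snd_comp_comp_inr_of_fst_comp_eq_fst (L : Module.End R (M × N))
    (hL : fst R M N ∘ₗ L = fst R M N) : L.det = (snd R M N ∘ₗ L ∘ₗ inr R M N).det := by
  classical
  let bM := Module.Free.chooseBasis R M
  let bN := Module.Free.chooseBasis R N
  have hfst (z : M × N) : (L z).1 = z.1 := LinearMap.congr_fun hL z
  have hblocks : toMatrix (bM.prod bN) (bM.prod bN) L = Matrix.fromBlocks 1 0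
      (toMatrix bM bN (snd R M N ∘ₗ L ∘ₗ inl R M N))
      (toMatrix bN bN (snd R M N ∘ₗ L ∘ₗ inr R M N)) := by
    ext (i | i) (j | j) <;>
      simp [toMatrix_apply, hfst, Matrix.one_apply, Finsupp.single_apply, eq_comm]
  rw [← det_toMatrix (bM.prod bN), hblocks, Matrix.det_fromBlocks_zero₁₂, Matrix.det_one,
    one_mul, det_toMatrix]

end LinearMap

section AffineCoupling

open ContinuousLinearMap

variable {E ι : Type*} [NormedAddCommGroup E] [NormedSpace ℝ E] [Fintype ι]

noncomputable def affineCoupling (s t : E → ι → ℝ) (h : E × (ι → ℝ)) : E × (ι → ℝ) :=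
  (h.1, fun i => h.2 i * Real.exp (s h.1 i) + t h.1 i)

variable {s t : E → ι → ℝ} {x : E}

theorem hasFDerivAt_affineCoupling (y : ι → ℝ) (hs : DifferentiableAt ℝ s x)
    (ht : DifferentiableAt ℝ t x) :
    HasFDerivAt (affineCoupling s t) ((fst ℝ E (ι → ℝ)).prod (pi fun i =>
      y i • Real.exp (s x i) • (proj i ∘L fderiv ℝ s x ∘L fst ℝ E (ι → ℝ)) +
        Real.exp (s x i) • (proj i ∘L snd ℝ E (ι → ℝ)) +
        proj i ∘L fderiv ℝ t x ∘L fst ℝ E (ι → ℝ))) (x, y) := by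
  refine hasFDerivAt_fst.prodMk (hasFDerivAt_pi'.2 fun i => ?_)
  have hsi := hasFDerivAt_pi'.1 (hs.hasFDerivAt.comp (x, y) (hasFDerivAt_fst (𝕜 := ℝ))) i
  have hti := hasFDerivAt_pi'.1 (ht.hasFDerivAt.comp (x, y) (hasFDerivAt_fst (𝕜 := ℝ))) i
  have hyi := hasFDerivAt_pi'.1 (hasFDerivAt_snd (𝕜 := ℝ) (p := (x, y))) i
  exact (hyi.mul hsi.exp).add hti

theorem det_fderiv_affineCoupling [FiniteDimensional ℝ E] (y : ι → ℝ)
    (hs : DifferentiableAt ℝ s x) (ht : DifferentiableAt ℝ t x) :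
    (fderiv ℝ (affineCoupling s t) (x, y)).toLinearMap.det = ∏ i, Real.exp (s x i) := by
  classical
  have hdiag : LinearMap.snd ℝ E (ι → ℝ) ∘ₗ
      (fderiv ℝ (affineCoupling s t) (x, y)).toLinearMap ∘ₗ LinearMap.inr ℝ E (ι → ℝ) =
      Matrix.toLin' (Matrix.diagonal fun i => Real.exp (s x i)) := by
    refine LinearMap.ext fun v => funext fun i => ?_
    simp [(hasFDerivAt_affineCoupling y hs ht).fderiv, Matrix.mulVec_diagonal, mul_comm]
  rw [LinearMap.det_eq_det_snd_comp_comp_inr_of_fst_comp_eq_fst _ ?_, hdiag,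
    LinearMap.det_toLin', Matrix.det_diagonal]
  refine LinearMap.ext fun z => ?_
  simp [(hasFDerivAt_affineCoupling y hs ht).fderiv]

end AffineCoupling

theorem stmt6_general (f F : ℕ)
    (s t : (Fin f → ℝ) → (Fin (F - f) → ℝ)) (h₁ : Fin f → ℝ)
    (hs : DifferentiableAt ℝ s h₁) (ht : DifferentiableAt ℝ t h₁)
    (Φ : ((Fin f → ℝ) × (Fin (F - f) → ℝ)) → ((Fin f → ℝ) × (Fin (F - f) → ℝ)))
    (hΦ : ∀ h : (Fin f → ℝ) × (Fin (F - f) → ℝ),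
      Φ h = (h.1, fun i => h.2 i * Real.exp (s h.1 i) + t h.1 i)) :
    ∀ h₂ : Fin (F - f) → ℝ,
      DifferentiableAt ℝ Φ (h₁, h₂) ∧
      LinearMap.det (fderiv ℝ Φ (h₁, h₂)).toLinearMap = Real.exp (∑ i, s h₁ i) ∧
      LinearMap.det (fderiv ℝ Φ (h₁, h₂)).toLinearMap = ∏ i, Real.exp (s h₁ i) ∧
      0 < LinearMap.det (fderiv ℝ Φ (h₁, h₂)).toLinearMap := by
  intro h₂
  obtain rfl : Φ = affineCoupling s t := funext hΦ
  have hdet := det_fderiv_affineCoupling h₂ hs ht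
  refine ⟨(hasFDerivAt_affineCoupling h₂ hs ht).differentiableAt, ?_, hdet, ?_⟩
  · rw [hdet, Real.exp_sum]
  · rw [hdet]
    positivity

/-- The affine coupling map `Φ (h₁, h₂) = (h₁, h₂ ⊙ exp (s h₁) + t h₁)` with `s, t`
differentiable at `h₁` is differentiable at every `(h₁, h₂)`, and the determinant of
its Fréchet derivative there equals `exp (∑ i, s h₁ i) = ∏ i, exp (s h₁ i)`; in
particular the determinant is strictly positive (and does not depend on `h₂`). -/
theorem stmt6 (f F : ℕ) (hf : 0 < f) (hfF : f < F)
    (s t : (Fin f → ℝ) → (Fin (F - f) → ℝ)) (h₁ : Fin f → ℝ)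
    (hs : DifferentiableAt ℝ s h₁) (ht : DifferentiableAt ℝ t h₁)
    (Φ : ((Fin f → ℝ) × (Fin (F - f) → ℝ)) → ((Fin f → ℝ) × (Fin (F - f) → ℝ)))
    (hΦ : ∀ h : (Fin f → ℝ) × (Fin (F - f) → ℝ),
      Φ h = (h.1, fun i => h.2 i * Real.exp (s h.1 i) + t h.1 i)) :
    ∀ h₂ : Fin (F - f) → ℝ,
      DifferentiableAt ℝ Φ (h₁, h₂) ∧
      LinearMap.det (fderiv ℝ Φ (h₁, h₂)).toLinearMap = Real.exp (∑ i, s h₁ i) ∧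
      LinearMap.det (fderiv ℝ Φ (h₁, h₂)).toLinearMap = ∏ i, Real.exp (s h₁ i) ∧
      0 < LinearMap.det (fderiv ℝ Φ (h₁, h₂)).toLinearMap :=
  stmt6_general f F s t h₁ hs ht Φ hΦ
end
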